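/- For every positive integer n and every complex number e not in {n, n−1, ..., 1} (so that all denominators are nonzero), ∑_{k=1}^n (e)_k (−n)_k / (k · (1)_k · (e−n)_k) = H_n(−e) − H_n, where H_n(x) = ∑_{i=1}^n 1/(x+i) and H_n = ∑_{i=1}^n 1/i. -/

import Mathlib

/-! Induction on `n`. Passing from `n` to `n + 1` changes the `k`-th summand by
`e / (n + 1 - e)` times the hypergeometric term `(e)_k (-n)_(k-1) / (k! (e - n)_k)`, and these
terms sum to `1 / (n + 1)`: Gosper's algorithm gives their partial sums in closed form. So the
left side grows by `e / ((n + 1) (n + 1 - e)) = 1 / (n + 1 - e) - 1 / (n + 1)`, exactly as the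
right side does. For `e = 0` both sides vanish. -/

noncomputable def cpoch (x : ℂ) (k : ℕ) : ℂ := ∏ i ∈ Finset.range k, (x + i)

noncomputable def Hc (n : ℕ) (x : ℂ) : ℂ := ∑ i ∈ Finset.range n, 1 / (x + (i + 1))

open Finset

lemma cpoch_succ_right (x : ℂ) (k : ℕ) : cpoch x (k + 1) = cpoch x k * (x + k) :=
  prod_range_succ _ _

lemma cpoch_succ_left (x : ℂ) (k : ℕ) : cpoch x (k + 1) = x * cpoch (x + 1) k := by
  simp only [cpoch, prod_range_succ', Nat.cast_zero, add_zero, Nat.cast_succ, add_assoc,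
    add_comm (1 : ℂ), mul_comm x]

lemma cpoch_sub_one_succ (x : ℂ) (k : ℕ) : cpoch (x - 1) (k + 1) = (x - 1) * cpoch x k := by
  rw [cpoch_succ_left, sub_add_cancel]

lemma cpoch_zero_succ (k : ℕ) : cpoch 0 (k + 1) = 0 := by
  simp [cpoch_succ_left]

lemma cpoch_neg_natCast_succ_self (n : ℕ) : cpoch (-n) (n + 1) = 0 := by
  simp [cpoch_succ_right]

noncomputable def summand (n : ℕ) (e : ℂ) (k : ℕ) : ℂ :=
  cpoch e k * cpoch (-n) k / (k * cpoch 1 k * cpoch (e - n) k)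

noncomputable def increment (n : ℕ) (e : ℂ) (j : ℕ) : ℂ :=
  cpoch e (j + 1) * cpoch (-n) j / (cpoch 1 (j + 1) * cpoch (e - n) (j + 1))

section
variable {n : ℕ} {e : ℂ}

lemma sub_natCast_add_natCast_ne_zero (he : ∀ m : ℕ, m ≤ n → e ≠ m) {i : ℕ}
    (hi : i ≤ n) : e - n + i ≠ 0 := fun h =>
  he (n - i) (Nat.sub_le n i) (by rw [Nat.cast_sub hi]; linear_combination h)

lemma summand_succ_self : summand n e (n + 1) = 0 := by
  simp [summand, cpoch_neg_natCast_succ_self]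

lemma summand_succ {j : ℕ} (hj : e - n + j ≠ 0) (hn : (n + 1 : ℂ) - e ≠ 0) :
    summand (n + 1) e (j + 1) = summand n e (j + 1) + e / (n + 1 - e) * increment n e j := by
  have hen : e - (n + 1) ≠ 0 := fun h => hn (by linear_combination -h)
  have h₁ : cpoch (-(n + 1 : ℕ)) (j + 1) = -(n + 1) * cpoch (-n) j := by
    rw [show -((n + 1 : ℕ) : ℂ) = -n - 1 by push_cast; ring, cpoch_sub_one_succ]; ring
  have h₂ : cpoch (e - (n + 1 : ℕ)) (j + 1) = (e - (n + 1)) * cpoch (e - n) j := by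
    rw [show e - ((n + 1 : ℕ) : ℂ) = e - n - 1 by push_cast; ring, cpoch_sub_one_succ]; ring
  simp only [summand, increment]
  rw [h₁, h₂, cpoch_succ_right (-n) j, cpoch_succ_right (e - n) j]
  push_cast
  field_simp
  ring

lemma increment_zero : increment n e 0 = e / (e - n) := by
  simp [increment, cpoch]

lemma increment_succ_mul {j : ℕ} (h : e - n + (j + 1) ≠ 0) :
    increment n e (j + 1) * ((j + 2) * (e - n + (j + 1))) =
      increment n e j * ((e + (j + 1)) * (j - n)) := by
  have hj : (1 + (j + 1) : ℂ) ≠ 0 := by norm_cast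
  simp only [increment, cpoch_succ_right _ (j + 1), cpoch_succ_right (e - n) j,
    cpoch_succ_right (-n) j]
  push_cast
  field_simp
  ring

lemma mul_sum_range_increment (he : ∀ m : ℕ, m ≤ n → e ≠ m) {j : ℕ} (hj : j ≤ n) :
    (n + 1) * e * ∑ i ∈ range (j + 1), increment n e i =
      e + (n - j) * (e + j + 1) * increment n e j := by
  induction j with
  | zero =>
    have hen : e - n ≠ 0 := by simpa using sub_natCast_add_natCast_ne_zero he (Nat.zero_le n)
    rw [sum_range_one, increment_zero]
    field_simp
    push_cast
    ring
  | succ j ih =>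
    have hstep := increment_succ_mul (n := n) (e := e) (j := j)
      (by exact_mod_cast sub_natCast_add_natCast_ne_zero he hj)
    rw [sum_range_succ, mul_add, ih (by omega)]
    push_cast
    linear_combination hstep

lemma sum_range_increment (he : ∀ m : ℕ, m ≤ n → e ≠ m) :
    ∑ i ∈ range (n + 1), increment n e i = 1 / (n + 1) := by
  have hsum := mul_sum_range_increment he le_rfl
  rw [sub_self, zero_mul, zero_mul, add_zero] at hsum
  have hn : (n + 1 : ℂ) ≠ 0 := by norm_cast
  rw [eq_div_iff hn]
  exact mul_left_cancel₀ (by exact_mod_cast he 0 (Nat.zero_le n)) (by linear_combination hsum)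

end

lemma sum_range_summand {e : ℂ} : ∀ n : ℕ, (∀ m : ℕ, m ≤ n → e ≠ m) →
    ∑ j ∈ range n, summand n e (j + 1) = Hc n (-e) - Hc n 0
  | 0, _ => by simp [Hc]
  | n + 1, he => by
    have he' : ∀ m : ℕ, m ≤ n → e ≠ m := fun m hm => he m (by omega)
    have hn : (n + 1 : ℂ) - e ≠ 0 := fun h =>
      he (n + 1) le_rfl (by push_cast; linear_combination -h)
    calc ∑ j ∈ range (n + 1), summand (n + 1) e (j + 1)
        = ∑ j ∈ range (n + 1), summand n e (j + 1) +
            e / (n + 1 - e) * ∑ j ∈ range (n + 1), increment n e j := by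
          rw [mul_sum, ← sum_add_distrib]
          refine sum_congr rfl fun j hj => summand_succ ?_ hn
          exact sub_natCast_add_natCast_ne_zero he' (Nat.lt_succ_iff.mp (mem_range.mp hj))
      _ = Hc n (-e) - Hc n 0 + e / (n + 1 - e) * (1 / (n + 1)) := by
          rw [sum_range_succ, sum_range_summand n he', sum_range_increment he',
            summand_succ_self, add_zero]
      _ = Hc (n + 1) (-e) - Hc (n + 1) 0 := by
          have hn' : -e + (n + 1) ≠ 0 := fun h => hn (by linear_combination h)
          have hincr : e / (n + 1 - e) * (1 / (n + 1)) =
              1 / (-e + (n + 1)) - 1 / (0 + (n + 1)) := by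
            rw [zero_add]; field_simp; ring
          simp only [Hc, sum_range_succ]
          linear_combination hincr

theorem stmt11 (n : ℕ) (e : ℂ)
    (he : ∀ j ∈ Finset.Icc 1 n, e ≠ (j : ℂ)) :
    ∑ k ∈ Finset.Icc 1 n,
      cpoch e k * cpoch (-(n : ℂ)) k / ((k : ℂ) * cpoch 1 k * cpoch (e - n) k)
    = Hc n (-e) - Hc n 0 := by
  rcases eq_or_ne e 0 with rfl | he0
  · rw [neg_zero, sub_self]
    refine sum_eq_zero fun k hk => ?_
    obtain ⟨m, rfl⟩ := Nat.exists_eq_add_one.mpr (mem_Icc.mp hk).1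
    rw [cpoch_zero_succ, zero_mul, zero_div]
  · have he' : ∀ m : ℕ, m ≤ n → e ≠ m := fun m hm => by
      rcases m.eq_zero_or_pos with rfl | hm0
      · exact_mod_cast he0
      · exact he m (mem_Icc.mpr ⟨hm0, hm⟩)
    have hreindex : ∑ k ∈ Icc 1 n, summand n e k = ∑ j ∈ range n, summand n e (j + 1) := by
      rw [range_eq_Ico, sum_Ico_add', zero_add, Ico_add_one_right_eq_Icc]
    exact hreindex.trans (sum_range_summand n he')
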